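/- Under hypotheses (F1) and (F2), for every λ > 0 the limit of h_λ(s)/s^{β-1} as s → +∞ equals μ₂ · 6^{β/2} (equivalently μ₂ · (√6)^{β}); in particular limsup_{s → +∞} h_λ(s)/s^{β-1} is finite. -/

import Mathlib

open Real Filter Topology

/-- The piecewise function `g` from the paper: `g(t) = sqrt(1 - κ t^2)` for `|t| < sqrt(1/(3κ))`,
and `g(t) = 1/(3 sqrt(2κ) |t|) + sqrt(1/6)` for `|t| ≥ sqrt(1/(3κ))`; in particular `g` is even. -/
noncomputable def gfun (κ : ℝ) (t : ℝ) : ℝ :=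
  if |t| < Real.sqrt (1 / (3 * κ)) then Real.sqrt (1 - κ * t ^ 2)
  else 1 / (3 * Real.sqrt (2 * κ) * |t|) + Real.sqrt (1 / 6)

/-- `G(t) = ∫ s in [0,t], g(s) ds`. -/
noncomputable def Gfun (κ : ℝ) (t : ℝ) : ℝ := ∫ s in (0:ℝ)..t, gfun κ s

/-- `G⁻¹`, the inverse function of `G`. -/
noncomputable def Ginv (κ : ℝ) : ℝ → ℝ := Function.invFun (Gfun κ)

/-- The transformed nonlinearity `h_λ(s) = f(G⁻¹ s)/g(G⁻¹ s) - λ G⁻¹ s / g(G⁻¹ s) + λ s`. -/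
noncomputable def hlam (κ : ℝ) (f : ℝ → ℝ) (lam : ℝ) (s : ℝ) : ℝ :=
  f (Ginv κ s) / gfun κ (Ginv κ s) - lam * Ginv κ s / gfun κ (Ginv κ s) + lam * s

/-!
The function `g` is squeezed between `1/√6` and `1` and tends to `1/√6` at infinity, so `G` is an
increasing bijection of `ℝ` with `G t / t → 1/√6`, i.e. `G⁻¹ s / s → √6`. Both this and
`f t ~ μ₂ t^(β-1)` come from the same fact, an integrated `∞/∞` l'Hôpital rule: integrals of a
function that is `o(ψ)` at infinity are `o(∫ ψ)` when `∫ ψ → ∞`. Writing `u = G⁻¹ s`,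
`h_λ(s) = (f u - λ u) / g u + λ s`, and `h_λ(s) / s^(β-1) → μ₂ · √6^(β-1) · √6`.
-/

open MeasureTheory Asymptotics

theorem Asymptotics.IsLittleO.intervalIntegral_atTop {E : Type*} [NormedAddCommGroup E]
    [NormedSpace ℝ E] {φ : ℝ → E} {ψ : ℝ → ℝ} {a : ℝ}
    (hφ : ∀ b ≥ a, IntervalIntegrable φ volume a b) (hψ : ∀ b ≥ a, IntervalIntegrable ψ volume a b)
    (hψ_nonneg : ∀ᶠ x in atTop, 0 ≤ ψ x)
    (hψ_top : Tendsto (fun t => ∫ x in a..t, ψ x) atTop atTop) (h : φ =o[atTop] ψ) :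
    (fun t => ∫ x in a..t, φ x) =o[atTop] (fun t => ∫ x in a..t, ψ x) := by
  rw [isLittleO_iff]
  intro ε hε
  obtain ⟨T₀, hT₀⟩ := eventually_atTop.1 ((h.bound (half_pos hε)).and hψ_nonneg)
  set T := max T₀ a
  have hTa : a ≤ T := le_max_right _ _
  set C := ‖∫ x in a..T, φ x‖ + ε / 2 * |∫ x in a..T, ψ x| with hC_def
  filter_upwards [eventually_ge_atTop T, hψ_top.eventually_ge_atTop (2 * C / ε)] with t hTt hCt
  have hta : a ≤ t := hTa.trans hTt
  have hTail : ‖∫ x in T..t, φ x‖ ≤ ε / 2 * ∫ x in T..t, ψ x := by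
    rw [← intervalIntegral.integral_const_mul]
    refine intervalIntegral.norm_integral_le_of_norm_le hTt (ae_of_all _ fun x hx => ?_)
      (((hψ T hTa).symm.trans (hψ t hta)).const_mul _)
    obtain ⟨hφx, hψx⟩ := hT₀ x ((le_max_left _ _).trans hx.1.le)
    rwa [norm_of_nonneg hψx] at hφx
  have hC : C ≤ ε / 2 * ∫ x in a..t, ψ x := by
    rw [div_le_iff₀ hε] at hCt
    linarith
  rw [← intervalIntegral.integral_add_adjacent_intervals (hφ T hTa)
      ((hφ T hTa).symm.trans (hφ t hta)),
    norm_of_nonneg ((by positivity : 0 ≤ 2 * C / ε).trans hCt)]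
  have hψ_split := intervalIntegral.integral_add_adjacent_intervals (hψ T hTa)
    ((hψ T hTa).symm.trans (hψ t hta))
  calc ‖(∫ x in a..T, φ x) + ∫ x in T..t, φ x‖
      ≤ ‖∫ x in a..T, φ x‖ + ε / 2 * ∫ x in T..t, ψ x := (norm_add_le _ _).trans (by linarith)
    _ ≤ C + ε / 2 * ∫ x in a..t, ψ x := by
      have := mul_le_mul_of_nonneg_left (neg_abs_le (∫ x in a..T, ψ x)) (half_pos hε).le
      rw [mul_neg] at this
      rw [← hψ_split, mul_add]
      linarith
    _ ≤ ε * ∫ x in a..t, ψ x := by linarith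

theorem tendsto_div_rpow_atTop_of_hasDerivAt {f f' : ℝ → ℝ} {a p μ : ℝ} (hp : 0 < p)
    (hf : ∀ x ∈ Set.Ici a, HasDerivAt f (f' x) x) (hf' : ∀ b ≥ a, IntervalIntegrable f' volume a b)
    (h : Tendsto (fun t => f' t / t ^ (p - 1)) atTop (𝓝 (μ * p))) :
    Tendsto (fun t => f t / t ^ p) atTop (𝓝 μ) := by
  have hψ : ∀ b, IntervalIntegrable (fun x : ℝ => x ^ (p - 1)) volume a b := fun b =>
    intervalIntegral.intervalIntegrable_rpow' (by linarith)
  have hψ_int : ∀ t, ∫ x in a..t, x ^ (p - 1) = (t ^ p - a ^ p) / p := fun t => by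
    rw [integral_rpow (Or.inl (by linarith)), sub_add_cancel]
  have htop : Tendsto (fun t : ℝ => t ^ p) atTop atTop := tendsto_rpow_atTop hp
  have hφ : (fun x => f' x - μ * p * x ^ (p - 1)) =o[atTop] (fun x => x ^ (p - 1)) := by
    refine (isLittleO_iff_tendsto' ?_).2 ?_
    · filter_upwards [eventually_gt_atTop 0] with x hx h0
      exact absurd h0 (rpow_pos_of_pos hx _).ne'
    · rw [← sub_self (μ * p)]
      refine (h.sub_const (μ * p)).congr' ?_
      filter_upwards [eventually_gt_atTop 0] with x hx
      field_simp [(rpow_pos_of_pos hx (p - 1)).ne']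
  have hint := hφ.intervalIntegral_atTop (a := a)
    (fun b hb => (hf' b hb).sub ((hψ b).const_mul _)) (fun b _ => hψ b)
    (by filter_upwards [eventually_gt_atTop 0] with x hx using (rpow_pos_of_pos hx _).le)
    (by simp only [hψ_int, sub_eq_add_neg _ (a ^ p)]; exact
      (tendsto_atTop_add_const_right _ (-a ^ p) htop).atTop_div_const hp)
  have hFTC : ∀ t ≥ a, ∫ x in a..t, (f' x - μ * p * x ^ (p - 1))
      = f t - μ * t ^ p - (f a - μ * a ^ p) := fun t ht => by
    rw [intervalIntegral.integral_sub (hf' t ht) ((hψ t).const_mul _),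
      intervalIntegral.integral_eq_sub_of_hasDerivAt (fun x hx => hf x ?_) (hf' t ht),
      intervalIntegral.integral_const_mul, hψ_int]
    · field_simp
      ring
    · rw [Set.uIcc_of_le ht] at hx; exact hx.1
  have hconst : ∀ c : ℝ, (fun _ => c) =o[atTop] (fun t : ℝ => t ^ p) := fun c =>
    isLittleO_const_left.2 (Or.inr (tendsto_norm_atTop_atTop.comp htop))
  have hbig : (fun t => ∫ x in a..t, x ^ (p - 1)) =O[atTop] (fun t => t ^ p) := by
    simp only [hψ_int, div_eq_inv_mul, mul_sub]
    exact ((isBigO_refl _ _).const_mul_left p⁻¹).sub (hconst _).isBigO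
  have hmain : (fun t => f t - μ * t ^ p) =o[atTop] (fun t => t ^ p) := by
    refine ((hint.trans_isBigO hbig).add (hconst (f a - μ * a ^ p))).congr' ?_ EventuallyEq.rfl
    filter_upwards [eventually_ge_atTop a] with t ht
    rw [hFTC t ht, sub_add_cancel]
  simpa using (hmain.tendsto_div_nhds_zero.add_const μ).congr' (by
    filter_upwards [eventually_gt_atTop 0] with t ht
    field_simp [(rpow_pos_of_pos ht p).ne']
    ring)

theorem ContDiffOn.tendsto_div_rpow_atTop {f : ℝ → ℝ} {a p μ : ℝ}
    (hf : ContDiffOn ℝ 1 f (Set.Ioi a)) (hp : 0 < p)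
    (h : Tendsto (fun t => deriv f t / t ^ (p - 1)) atTop (𝓝 (μ * p))) :
    Tendsto (fun t => f t / t ^ p) atTop (𝓝 μ) := by
  have hsub : ∀ b ≥ a + 1, Set.uIcc (a + 1) b ⊆ Set.Ioi a := fun b hb x hx => by
    rw [Set.uIcc_of_le hb] at hx
    exact (lt_add_one a).trans_le hx.1
  refine tendsto_div_rpow_atTop_of_hasDerivAt (a := a + 1) hp (fun x hx => ?_) (fun b hb => ?_) h
  · exact ((hf.contDiffAt (Ioi_mem_nhds ((lt_add_one a).trans_le hx))).differentiableAt
      one_ne_zero).hasDerivAt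
  · exact ((hf.continuousOn_deriv_of_isOpen isOpen_Ioi le_rfl).mono (hsub b hb)).intervalIntegrable

lemma tendsto_self_div_rpow_atTop {p : ℝ} (hp : 1 < p) :
    Tendsto (fun x : ℝ => x / x ^ p) atTop (𝓝 0) := by
  refine (tendsto_rpow_neg_atTop (sub_pos.2 hp)).congr' ?_
  filter_upwards [eventually_gt_atTop 0] with x hx
  rw [neg_sub, rpow_sub hx, rpow_one]

section
variable {κ : ℝ}

lemma sqrt_one_div_six_pos : 0 < √(1 / 6) := by positivity

lemma inv_sqrt_one_div_six : (√(1 / 6))⁻¹ = √6 := by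
  rw [sqrt_div' _ (by norm_num), sqrt_one, one_div, inv_inv]

lemma sqrt_one_div_six_le_gfun (hκ : 0 < κ) (t : ℝ) : √(1 / 6) ≤ gfun κ t := by
  unfold gfun
  split_ifs with ht
  · have ht2 : t ^ 2 < 1 / (3 * κ) := by
      rw [← sq_abs, ← sq_sqrt (by positivity : (0:ℝ) ≤ 1 / (3 * κ))]
      exact pow_lt_pow_left₀ ht (abs_nonneg t) two_ne_zero
    have : κ * t ^ 2 < 1 / 3 := by
      calc κ * t ^ 2 < κ * (1 / (3 * κ)) := mul_lt_mul_of_pos_left ht2 hκ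
        _ = 1 / 3 := by field_simp
    exact sqrt_le_sqrt (by linarith)
  · have : 0 ≤ 1 / (3 * √(2 * κ) * |t|) := by positivity
    linarith

lemma gfun_pos (hκ : 0 < κ) (t : ℝ) : 0 < gfun κ t :=
  sqrt_one_div_six_pos.trans_le (sqrt_one_div_six_le_gfun hκ t)

lemma gfun_le_one (hκ : 0 < κ) (t : ℝ) : gfun κ t ≤ 1 := by
  unfold gfun
  split_ifs with ht
  · exact sqrt_le_one.2 (by nlinarith [sq_nonneg t])
  · have hs6 : 3 * √(2 * κ) * √(1 / (3 * κ)) = √6 := by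
      rw [mul_assoc, ← sqrt_mul (by positivity), ← sqrt_sq (by norm_num : (0:ℝ) ≤ 3),
        ← sqrt_mul (by norm_num)]
      congr 1
      field_simp
      norm_num
    have h1 : 1 / (3 * √(2 * κ) * |t|) ≤ 1 / √6 := by
      rw [← hs6]
      gcongr
      exact not_lt.1 ht
    have h2 : 1 / √6 ≤ 1 / 2 := one_div_le_one_div_of_le two_pos (le_sqrt_of_sq_le (by norm_num))
    rw [sqrt_div' _ (by norm_num), sqrt_one]
    linarith

lemma gfun_of_sqrt_le {t : ℝ} (ht : √(1 / (3 * κ)) ≤ t) :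
    gfun κ t = 1 / (3 * √(2 * κ) * t) + √(1 / 6) := by
  have habs : |t| = t := abs_of_nonneg ((sqrt_nonneg _).trans ht)
  rw [gfun, if_neg (by rw [habs]; exact not_lt.2 ht), habs]

lemma tendsto_gfun_atTop (hκ : 0 < κ) : Tendsto (gfun κ) atTop (𝓝 √(1 / 6)) := by
  have h : Tendsto (fun t : ℝ => 1 / (3 * √(2 * κ) * t)) atTop (𝓝 0) :=
    tendsto_const_nhds.div_atTop (tendsto_id.const_mul_atTop (by positivity))
  have h' := h.add_const √(1 / 6)
  rw [zero_add] at h'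
  refine h'.congr' ?_
  filter_upwards [eventually_ge_atTop √(1 / (3 * κ))] with t ht
  rw [gfun_of_sqrt_le ht]

lemma measurable_gfun : Measurable (gfun κ) := by
  unfold gfun
  refine Measurable.ite (measurableSet_lt measurable_abs measurable_const) ?_ ?_ <;> fun_prop

lemma intervalIntegrable_gfun (hκ : 0 < κ) (a b : ℝ) :
    IntervalIntegrable (gfun κ) volume a b := by
  refine (intervalIntegrable_const (c := (1:ℝ))).mono_fun' measurable_gfun.aestronglyMeasurable
    (ae_of_all _ fun x => ?_)
  dsimp only
  rw [norm_of_nonneg (gfun_pos hκ x).le]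
  exact gfun_le_one hκ x

lemma continuous_Gfun (hκ : 0 < κ) : Continuous (Gfun κ) :=
  intervalIntegral.continuous_primitive (intervalIntegrable_gfun hκ) 0

lemma sqrt_one_div_six_mul_sub_le_Gfun_sub (hκ : 0 < κ) {a b : ℝ} (hab : a ≤ b) :
    √(1 / 6) * (b - a) ≤ Gfun κ b - Gfun κ a := by
  rw [Gfun, Gfun, intervalIntegral.integral_interval_sub_left (intervalIntegrable_gfun hκ 0 b)
    (intervalIntegrable_gfun hκ 0 a)]
  simpa [mul_comm] using intervalIntegral.integral_mono_on hab intervalIntegrable_const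
    (intervalIntegrable_gfun hκ a b) fun x _ => sqrt_one_div_six_le_gfun hκ x

lemma strictMono_Gfun (hκ : 0 < κ) : StrictMono (Gfun κ) := fun _ _ hab =>
  sub_pos.1 <| (mul_pos sqrt_one_div_six_pos (sub_pos.2 hab)).trans_le
    (sqrt_one_div_six_mul_sub_le_Gfun_sub hκ hab.le)

lemma Gfun_zero : Gfun κ 0 = 0 := intervalIntegral.integral_same

lemma surjective_Gfun (hκ : 0 < κ) : Function.Surjective (Gfun κ) := by
  refine (continuous_Gfun hκ).surjective ?_ ?_
  · refine tendsto_atTop_mono' _ ?_ (tendsto_id.const_mul_atTop sqrt_one_div_six_pos)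
    filter_upwards [eventually_ge_atTop 0] with t ht
    simpa [Gfun_zero] using sqrt_one_div_six_mul_sub_le_Gfun_sub hκ ht
  · refine tendsto_atBot_mono' _ ?_ (tendsto_id.const_mul_atBot sqrt_one_div_six_pos)
    filter_upwards [eventually_le_atBot 0] with t ht
    have := sqrt_one_div_six_mul_sub_le_Gfun_sub hκ ht
    rw [Gfun_zero] at this
    simp only [id]
    linarith

lemma Gfun_Ginv (hκ : 0 < κ) (s : ℝ) : Gfun κ (Ginv κ s) = s :=
  Function.rightInverse_invFun (surjective_Gfun hκ) s

lemma tendsto_Ginv_atTop (hκ : 0 < κ) : Tendsto (Ginv κ) atTop atTop := by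
  refine tendsto_atTop.2 fun b => ?_
  filter_upwards [eventually_ge_atTop (Gfun κ b)] with s hs
  rw [← (strictMono_Gfun hκ).le_iff_le, Gfun_Ginv hκ]
  exact hs

lemma tendsto_Gfun_div_atTop (hκ : 0 < κ) :
    Tendsto (fun t => Gfun κ t / t) atTop (𝓝 √(1 / 6)) := by
  have hint := (isLittleO_one_iff ℝ).2 (tendsto_sub_nhds_zero_iff.2 (tendsto_gfun_atTop hκ))
    |>.intervalIntegral_atTop (a := 0)
      (fun b _ => (intervalIntegrable_gfun hκ 0 b).sub intervalIntegrable_const)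
      (fun b _ => intervalIntegrable_const) (Eventually.of_forall fun _ => zero_le_one)
      (by simp only [integral_one, sub_zero]; exact tendsto_id)
  simp only [integral_one, sub_zero] at hint
  have hG : ∀ t, ∫ x in 0..t, (gfun κ x - √(1 / 6)) = Gfun κ t - t * √(1 / 6) := fun t => by
    rw [intervalIntegral.integral_sub (intervalIntegrable_gfun hκ 0 t) intervalIntegrable_const,
      intervalIntegral.integral_const, sub_zero, smul_eq_mul, Gfun]
  simp only [hG] at hint
  have := hint.tendsto_div_nhds_zero.add_const √(1 / 6)
  rw [zero_add] at this
  refine this.congr' ?_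
  filter_upwards [eventually_ne_atTop 0] with t ht
  field_simp
  ring

lemma tendsto_Ginv_div_atTop (hκ : 0 < κ) :
    Tendsto (fun s => Ginv κ s / s) atTop (𝓝 √6) := by
  have h := ((tendsto_Gfun_div_atTop hκ).comp (tendsto_Ginv_atTop hκ)).inv₀
    sqrt_one_div_six_pos.ne'
  rw [inv_sqrt_one_div_six] at h
  refine h.congr fun s => ?_
  simp only [Function.comp_apply, Gfun_Ginv hκ, inv_div]

lemma hlam_div_rpow_eq (hκ : 0 < κ) (f : ℝ → ℝ) (lam β : ℝ) {s : ℝ} (hs : 0 < s)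
    (hu : 0 < Ginv κ s) :
    hlam κ f lam s / s ^ (β - 1) = (f (Ginv κ s) - lam * Ginv κ s) / Ginv κ s ^ (β - 1)
      * (Ginv κ s / s) ^ (β - 1) * (gfun κ (Ginv κ s))⁻¹ + lam * (s / s ^ (β - 1)) := by
  have := gfun_pos hκ (Ginv κ s)
  rw [hlam, div_rpow hu.le hs.le]
  field_simp [(rpow_pos_of_pos hs (β - 1)).ne', (rpow_pos_of_pos hu (β - 1)).ne']

end

theorem stmt_16_general (N : ℕ) (f : ℝ → ℝ)
    (hf1 : ContDiffOn ℝ 1 f (Set.Ici (0 : ℝ)))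
    (β μ₂ : ℝ)
    (hβ : 2 < β ∧ β < 2 * N / (N - 2))
    (hdinf : Tendsto (fun t : ℝ => deriv f t / t ^ (β - 2)) atTop
      (𝓝 (μ₂ * (β - 1))))
    (κ : ℝ) (hκ : 0 < κ) (lam : ℝ) :
    Tendsto (fun s : ℝ => hlam κ f lam s / s ^ (β - 1)) atTop
      (𝓝 (μ₂ * Real.sqrt 6 ^ β)) := by
  have hβ1 : 1 < β - 1 := by linarith [hβ.1]
  have hf : Tendsto (fun t => (f t - lam * t) / t ^ (β - 1)) atTop (𝓝 μ₂) := by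
    have := (hf1.mono Set.Ioi_subset_Ici_self).tendsto_div_rpow_atTop (p := β - 1) (μ := μ₂)
      (by linarith) (by rwa [sub_sub, one_add_one_eq_two])
    simpa [sub_div, mul_div_assoc] using
      this.sub ((tendsto_self_div_rpow_atTop hβ1).const_mul lam)
  have hg : Tendsto (fun s => (gfun κ (Ginv κ s))⁻¹) atTop (𝓝 √6) := by
    have := ((tendsto_gfun_atTop hκ).comp (tendsto_Ginv_atTop hκ)).inv₀ sqrt_one_div_six_pos.ne'
    rwa [inv_sqrt_one_div_six] at this
  have hlim := ((hf.comp (tendsto_Ginv_atTop hκ)).mul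
    ((tendsto_Ginv_div_atTop hκ).rpow_const (p := β - 1) (Or.inl (by positivity)))).mul hg |>.add
    ((tendsto_self_div_rpow_atTop hβ1).const_mul lam)
  rw [mul_zero, add_zero, mul_assoc, ← rpow_add_one (by positivity), sub_add_cancel] at hlim
  refine hlim.congr' ?_
  filter_upwards [eventually_gt_atTop 0, (tendsto_Ginv_atTop hκ).eventually_gt_atTop 0]
    with s hs hu
  exact (hlam_div_rpow_eq hκ f lam β hs hu).symm

/-- under (F1)-(F2), for every `λ > 0`,
`h_λ(s)/s^(β-1) → μ₂ * (sqrt 6)^β` as `s → +∞`. -/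
theorem stmt_16 (N : ℕ) (hN : 3 ≤ N) (f : ℝ → ℝ)
    (hf1 : ContDiffOn ℝ 1 f (Set.Ici (0 : ℝ))) (hf0 : f 0 = 0)
    (hfpos : ∀ s : ℝ, 0 < s → 0 < f s)
    (α β μ₁ μ₂ : ℝ)
    (hα : 2 < α ∧ α < 2 * N / (N - 2)) (hβ : 2 < β ∧ β < 2 * N / (N - 2))
    (hμ₁ : 0 < μ₁) (hμ₂ : 0 < μ₂)
    (hd0 : Tendsto (fun t : ℝ => deriv f t / t ^ (α - 2)) (𝓝[>] (0 : ℝ))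
      (𝓝 (μ₁ * (α - 1))))
    (hdinf : Tendsto (fun t : ℝ => deriv f t / t ^ (β - 2)) atTop
      (𝓝 (μ₂ * (β - 1))))
    (κ : ℝ) (hκ : 0 < κ) (lam : ℝ) (hlam_pos : 0 < lam) :
    Tendsto (fun s : ℝ => hlam κ f lam s / s ^ (β - 1)) atTop
      (𝓝 (μ₂ * Real.sqrt 6 ^ β)) :=
  stmt_16_general N f hf1 β μ₂ hβ hdinf κ hκ lam
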